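/- Let M, M̂ ∈ ℝ^{d×d} be symmetric positive semidefinite matrices such that D := M − M̂ is symmetric positive semidefinite, and let ε_1 ≥ ε_2 ≥ … ≥ ε_d ≥ 0 be the eigenvalues of D in non-increasing order. Let W ∈ ℝ^{r×d} satisfy W Wᵀ = I_r, let G ∈ ℝ^{r×r} be symmetric positive definite with G − σ² I_r positive semidefinite for some σ² > 0, and let L ∈ ℝ^{r×r} satisfy L Lᵀ = G^{-1}. Then |(1/2)·log det(I_r + Lᵀ W M Wᵀ L) − (1/2)·log det(I_r + Lᵀ W M̂ Wᵀ L)| ≤ (1/2)·Σ_{i=1}^d log(1 + ε_i/σ²). -/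

import Mathlib

/-!
Put `P = Lᵀ W`, so that both determinants are `det (1 + P X Pᵀ)`, and split
`P M Pᵀ = P M̂ Pᵀ + P D Pᵀ` with `D = M - M̂`. Monotonicity of `det` on the Loewner order gives
the lower bound `0`, and subadditivity `det (1 + A + C) ≤ det (1 + A) det (1 + C)` (a consequence
of `(1 + A)⁻¹ ≤ 1`) the upper bound `log det (1 + P D Pᵀ)`. By Weinstein–Aronszajn this is
`log det (1 + Pᵀ P D)`, and `Pᵀ P = Wᵀ G⁻¹ W ≤ σ⁻² Wᵀ W ≤ σ⁻²` bounds it by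
`log det (1 + σ⁻² D) = ∑ᵢ log (1 + εᵢ / σ²)`.
-/

open Matrix

/-- `eigs M i` is the `i`-th largest eigenvalue of a Hermitian (symmetric) real matrix `M`
(junk value `0` if `M` is not Hermitian). -/
noncomputable def eigs {d : ℕ} (M : Matrix (Fin d) (Fin d) ℝ) : Fin d → ℝ :=
  if h : M.IsHermitian then
    fun i => (h.eigenvalues ∘ Tuple.sort h.eigenvalues) i.rev
  else 0

open Real
open scoped MatrixOrder

namespace Matrix

variable {m n : Type*} [Fintype m] [Fintype n]

lemma mul_mul_transpose_le_mul_mul_transpose {X Y : Matrix n n ℝ} (h : X ≤ Y)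
    (P : Matrix m n ℝ) : P * X * Pᵀ ≤ P * Y * Pᵀ := by
  rw [le_iff] at h ⊢
  simpa [Matrix.mul_sub, Matrix.sub_mul, conjTranspose_eq_transpose_of_trivial] using
    h.mul_mul_conjTranspose_same P

lemma mul_mul_transpose_nonneg {X : Matrix n n ℝ} (h : 0 ≤ X) (P : Matrix m n ℝ) :
    0 ≤ P * X * Pᵀ := by
  simpa using mul_mul_transpose_le_mul_mul_transpose h P

lemma transpose_mul_self_nonneg (P : Matrix m n ℝ) : 0 ≤ Pᵀ * P := by
  simpa [conjTranspose_eq_transpose_of_trivial] using (posSemidef_conjTranspose_mul_self P).nonneg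

variable [DecidableEq m] [DecidableEq n]

lemma transpose_mul_self_le_one {W : Matrix m n ℝ} (hW : W * Wᵀ = 1) : Wᵀ * W ≤ 1 := by
  refine IsStarProjection.le_one ⟨?_, ?_⟩
  · rw [IsIdempotentElem, Matrix.mul_assoc, ← Matrix.mul_assoc W, hW, Matrix.one_mul]
  · simp [IsSelfAdjoint, star_eq_conjTranspose, conjTranspose_eq_transpose_of_trivial]

lemma IsHermitian.det_one_add_smul {A : Matrix n n ℝ} (hA : A.IsHermitian) (c : ℝ) :
    (1 + c • A).det = ∏ i, (1 + c * hA.eigenvalues i) := by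
  have : 1 + c • A = cfc (fun x => 1 + c * x) A := by
    rw [cfc_add .., cfc_const_one .., cfc_const_mul .., cfc_id' ..]
  rw [this, hA.cfc_eq, IsHermitian.cfc]
  simp [-Unitary.conjStarAlgAut_apply]

lemma one_le_det_one_add {E : Matrix n n ℝ} (hE : 0 ≤ E) : 1 ≤ (1 + E).det := by
  have hE' := nonneg_iff_posSemidef.mp hE
  have hdet := hE'.isHermitian.det_one_add_smul 1
  rw [one_smul] at hdet
  rw [hdet]
  exact Finset.one_le_prod fun i _ => by simpa using hE'.eigenvalues_nonneg i

lemma PosDef.inv_le_smul_one {G : Matrix n n ℝ} (hG : G.PosDef) {c : ℝ} (hc : 0 < c)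
    (h : c • 1 ≤ G) : G⁻¹ ≤ c⁻¹ • 1 := by
  have hu : IsUnit G := (isUnit_iff_isUnit_det G).2 (isUnit_iff_ne_zero.2 hG.det_pos.ne')
  have hG' : IsSelfAdjoint G := hG.isHermitian
  -- `G⁻¹ = cfc (·⁻¹) G`, and `x⁻¹ ≤ c⁻¹` on the spectrum of `G`, which lies in `[c, ∞)`.
  rw [← Algebra.algebraMap_eq_smul_one, algebraMap_le_iff_le_spectrum] at h
  rw [← Algebra.algebraMap_eq_smul_one, nonsing_inv_eq_ringInverse,
    ← cfc_ringInverse_id (R := ℝ) G hu, cfc_le_algebraMap_iff (fun x : ℝ => x⁻¹) c⁻¹ G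
      (continuousOn_inv₀.mono fun x hx => ne_of_mem_of_not_mem hx (spectrum.zero_notMem ℝ hu))]
  exact fun x hx => inv_anti₀ hc (h x hx)

lemma PosDef.det_le_det_of_le {X Y : Matrix n n ℝ} (hX : X.PosDef) (hXY : X ≤ Y) :
    X.det ≤ Y.det := by
  -- `Y = X + Bᴴ B`, and the matrix determinant lemma gives `det Y = det X * det (1 + B X⁻¹ Bᴴ)`.
  obtain ⟨B, hB⟩ := CStarAlgebra.nonneg_iff_eq_star_mul_self.mp (sub_nonneg.mpr hXY)
  rw [← add_sub_cancel X Y, hB, det_add_mul _ _ (isUnit_iff_ne_zero.2 hX.det_pos.ne')]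
  exact le_mul_of_one_le_right hX.det_pos.le
    (one_le_det_one_add (star_right_conjugate_nonneg hX.inv.posSemidef.nonneg B))

lemma det_one_add_le_det_one_add {E F : Matrix n n ℝ} (hE : 0 ≤ E) (hEF : E ≤ F) :
    (1 + E).det ≤ (1 + F).det :=
  (PosDef.one.add_posSemidef (nonneg_iff_posSemidef.mp hE)).det_le_det_of_le
    (add_le_add_right hEF 1)

lemma det_one_add_mul_le_det_one_add_mul {X Y C : Matrix n n ℝ} (hX : 0 ≤ X) (hXY : X ≤ Y)
    (hC : 0 ≤ C) : (1 + X * C).det ≤ (1 + Y * C).det := by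
  -- With `C = Bᴴ B`, Weinstein–Aronszajn turns `det (1 + X C)` into `det (1 + B X Bᴴ)`.
  obtain ⟨B, rfl⟩ := CStarAlgebra.nonneg_iff_eq_star_mul_self.mp hC
  rw [← Matrix.mul_assoc, ← Matrix.mul_assoc, det_one_add_mul_comm, det_one_add_mul_comm (Y * _),
    ← Matrix.mul_assoc, ← Matrix.mul_assoc]
  exact det_one_add_le_det_one_add (star_right_conjugate_nonneg hX B)
    (star_right_conjugate_le_conjugate hXY B)

lemma det_one_add_add_le_mul {A C : Matrix n n ℝ} (hA : 0 ≤ A) (hC : 0 ≤ C) :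
    (1 + (A + C)).det ≤ (1 + A).det * (1 + C).det := by
  have hA' : (1 + A).PosDef := PosDef.one.add_posSemidef (nonneg_iff_posSemidef.mp hA)
  have hinv : (1 + A)⁻¹ ≤ 1 := by
    simpa using hA'.inv_le_smul_one one_pos (by simpa using hA)
  calc (1 + (A + C)).det = (1 + A).det * (1 + (1 + A)⁻¹ * C).det := by
        simpa [add_assoc] using det_add_mul C 1 (isUnit_iff_ne_zero.2 hA'.det_pos.ne')
    _ ≤ (1 + A).det * (1 + 1 * C).det := mul_le_mul_of_nonneg_left
        (det_one_add_mul_le_det_one_add_mul hA'.inv.posSemidef.nonneg hinv hC) hA'.det_pos.le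
    _ = (1 + A).det * (1 + C).det := by rw [Matrix.one_mul]

lemma det_one_add_mul_mul_transpose_le {P : Matrix m n ℝ} {D : Matrix n n ℝ} (hD : 0 ≤ D)
    {c : ℝ} (hP : Pᵀ * P ≤ c • 1) : (1 + P * D * Pᵀ).det ≤ (1 + c • D).det :=
  calc (1 + P * D * Pᵀ).det = (1 + Pᵀ * P * D).det := by
        rw [det_one_add_mul_comm, Matrix.mul_assoc]
    _ ≤ (1 + (c • 1) * D).det :=
        det_one_add_mul_le_det_one_add_mul (transpose_mul_self_nonneg P) hP hD
    _ = (1 + c • D).det := by rw [Matrix.smul_mul, Matrix.one_mul]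

end Matrix

lemma sum_comp_eigs {d : ℕ} {A : Matrix (Fin d) (Fin d) ℝ} (hA : A.IsHermitian) (f : ℝ → ℝ) :
    ∑ i, f (eigs A i) = ∑ i, f (hA.eigenvalues i) := by
  simp only [eigs, dif_pos hA, Function.comp]
  exact Equiv.sum_comp (Fin.revPerm.trans (Tuple.sort hA.eigenvalues)) (f ∘ hA.eigenvalues)

lemma sum_log_one_add_eigs_div {d : ℕ} {D : Matrix (Fin d) (Fin d) ℝ} (hD : D.PosSemidef)
    {s : ℝ} (hs : 0 < s) : ∑ i, log (1 + eigs D i / s) = log (1 + s⁻¹ • D).det := by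
  rw [sum_comp_eigs hD.isHermitian (fun x => log (1 + x / s)), hD.isHermitian.det_one_add_smul,
    log_prod fun i _ => by have := hD.eigenvalues_nonneg i; positivity]
  simp only [inv_mul_eq_div]

lemma abs_log_sub_log_le_log_of_le_mul {a b c : ℝ} (hb : 0 < b) (hba : b ≤ a) (habc : a ≤ b * c) :
    |log a - log b| ≤ log c := by
  have hc : 0 < c := pos_of_mul_pos_right (hb.trans_le (hba.trans habc)) hb.le
  rw [abs_of_nonneg (sub_nonneg.2 (log_le_log hb hba)), sub_le_iff_le_add',
    ← log_mul hb.ne' hc.ne']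
  exact log_le_log (hb.trans_le hba) habc

theorem stmt10_general (d r : ℕ)
    (M Mhat : Matrix (Fin d) (Fin d) ℝ)
    (hMhat : Mhat.PosSemidef) (hD : (M - Mhat).PosSemidef)
    (W : Matrix (Fin r) (Fin d) ℝ) (hW : W * Wᵀ = 1)
    (G : Matrix (Fin r) (Fin r) ℝ) (hG : G.PosDef)
    (σ2 : ℝ) (hσ2 : 0 < σ2)
    (hGσ : (G - σ2 • (1 : Matrix (Fin r) (Fin r) ℝ)).PosSemidef)
    (L : Matrix (Fin r) (Fin r) ℝ) (hL : L * Lᵀ = G⁻¹) :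
    |(1 / 2) * Real.log (1 + Lᵀ * W * M * Wᵀ * L).det -
        (1 / 2) * Real.log (1 + Lᵀ * W * Mhat * Wᵀ * L).det| ≤
      (1 / 2) * ∑ i, Real.log (1 + eigs (M - Mhat) i / σ2) := by
  set P := Lᵀ * W
  have hP (X : Matrix (Fin d) (Fin d) ℝ) : Lᵀ * W * X * Wᵀ * L = P * X * Pᵀ := by
    simp [P, Matrix.mul_assoc]
  have hsplit : P * M * Pᵀ = P * Mhat * Pᵀ + P * (M - Mhat) * Pᵀ := by
    rw [Matrix.mul_sub, Matrix.sub_mul, add_sub_cancel]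
  have hPP : Pᵀ * P ≤ σ2⁻¹ • 1 :=
    calc Pᵀ * P = Wᵀ * G⁻¹ * Wᵀᵀ := by simp [P, ← hL, Matrix.mul_assoc]
      _ ≤ Wᵀ * (σ2⁻¹ • 1) * Wᵀᵀ := mul_mul_transpose_le_mul_mul_transpose
          (hG.inv_le_smul_one hσ2 (le_iff.mpr hGσ)) Wᵀ
      _ = σ2⁻¹ • (Wᵀ * W) := by simp
      _ ≤ σ2⁻¹ • 1 := smul_le_smul_of_nonneg_left (transpose_mul_self_le_one hW) (by positivity)
  have hAhat : 0 ≤ P * Mhat * Pᵀ := mul_mul_transpose_nonneg hMhat.nonneg P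
  have hC : 0 ≤ P * (M - Mhat) * Pᵀ := mul_mul_transpose_nonneg hD.nonneg P
  have hdet_ge_one : 1 ≤ (1 + P * Mhat * Pᵀ).det := one_le_det_one_add hAhat
  have hlower : (1 + P * Mhat * Pᵀ).det ≤ (1 + P * M * Pᵀ).det :=
    det_one_add_le_det_one_add hAhat (hsplit ▸ le_add_of_nonneg_right hC)
  have hupper : (1 + P * M * Pᵀ).det ≤ (1 + P * Mhat * Pᵀ).det * (1 + σ2⁻¹ • (M - Mhat)).det :=
    hsplit ▸ (det_one_add_add_le_mul hAhat hC).trans (mul_le_mul_of_nonneg_left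
      (det_one_add_mul_mul_transpose_le hD.nonneg hPP) (zero_le_one.trans hdet_ge_one))
  rw [hP, hP, ← mul_sub, abs_mul, abs_of_pos one_half_pos, sum_log_one_add_eigs_div hD hσ2]
  gcongr
  exact abs_log_sub_log_le_log_of_le_mul (hdet_ge_one.trans_lt' one_pos) hlower hupper

/-- Term (a) of the paper's error analysis: difference of log-dets under truncation of `M`. -/
theorem stmt10 (d r : ℕ)
    (M Mhat : Matrix (Fin d) (Fin d) ℝ)
    (hM : M.PosSemidef) (hMhat : Mhat.PosSemidef) (hD : (M - Mhat).PosSemidef)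
    (W : Matrix (Fin r) (Fin d) ℝ) (hW : W * Wᵀ = 1)
    (G : Matrix (Fin r) (Fin r) ℝ) (hGsymm : G.IsSymm) (hG : G.PosDef)
    (σ2 : ℝ) (hσ2 : 0 < σ2)
    (hGσ : (G - σ2 • (1 : Matrix (Fin r) (Fin r) ℝ)).PosSemidef)
    (L : Matrix (Fin r) (Fin r) ℝ) (hL : L * Lᵀ = G⁻¹) :
    |(1 / 2) * Real.log (1 + Lᵀ * W * M * Wᵀ * L).det -
        (1 / 2) * Real.log (1 + Lᵀ * W * Mhat * Wᵀ * L).det| ≤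
      (1 / 2) * ∑ i, Real.log (1 + eigs (M - Mhat) i / σ2) :=
  stmt10_general d r M Mhat hMhat hD W hW G hG σ2 hσ2 hGσ L hL
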